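/- Let l ∈ ℂ. If there exists no p ∈ ℤ with 2p + k + l - 1 = 0 and no p ∈ ℤ with 2p + k - l - 1 = 0 (e.g., whenever l + k is not an odd integer), then the principal series module with basis (e_p)_{p∈ℤ} and operators E e_p = (-(p+k/2) - (l-1)/2)e_{p-1}, F e_p = ((p+k/2) - (l-1)/2)e_{p+1}, H e_p = -2(p+k/2)e_p is irreducible: its only submodules invariant under E, F, H are 0 and the whole space. -/

import Mathlib

/-!
The basis vectors `e_p` are eigenvectors of `H` with pairwise distinct eigenvalues
`-2 (p + k/2)`, so an `H`-invariant subspace containing `x` contains every component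
`x_q e_q` of `x` (apply `∏_{r ≠ q} (H - μ_r)`). Hence a nonzero invariant subspace contains
some `e_q`, and since no structure constant of `E` or `F` vanishes, the ladder operators
carry `e_q` to every `e_p`.
-/

/-- Operator on the free ℂ-module on basis `(e_p)_{p ∈ ℤ}` (encoded as `ℤ →₀ ℂ`)
sending `e_p` to `a p • e_(p+s)`. -/
noncomputable def sop (a : ℤ → ℂ) (s : ℤ) : Module.End ℂ (ℤ →₀ ℂ) :=
  Finsupp.lsum ℂ fun p => a p • Finsupp.lsingle (p + s)

/-- `E e_p = (-(p + k/2) - (l-1)/2) e_(p-1)`. -/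
noncomputable def Eop (k l : ℂ) : Module.End ℂ (ℤ →₀ ℂ) :=
  sop (fun p => -((p : ℂ) + k / 2) - (l - 1) / 2) (-1)
/-- `F e_p = ((p + k/2) - (l-1)/2) e_(p+1)`. -/
noncomputable def Fop (k l : ℂ) : Module.End ℂ (ℤ →₀ ℂ) :=
  sop (fun p => ((p : ℂ) + k / 2) - (l - 1) / 2) 1
/-- `H e_p = -2 (p + k/2) e_p`. -/
noncomputable def Hop (k : ℂ) : Module.End ℂ (ℤ →₀ ℂ) :=
  sop (fun p => -2 * ((p : ℂ) + k / 2)) 0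

open Finsupp

lemma sop_single (a : ℤ → ℂ) (s p : ℤ) (c : ℂ) :
    sop a s (single p c) = single (p + s) (a p * c) := by
  rw [sop, lsum_single, LinearMap.smul_apply, lsingle_apply, smul_single, smul_eq_mul]

lemma sop_zero_apply (a : ℤ → ℂ) (x : ℤ →₀ ℂ) (q : ℤ) : sop a 0 x q = a q * x q := by
  induction x using induction_linear with
  | zero => simp
  | add f g hf hg => rw [map_add, Finsupp.add_apply, hf, hg, Finsupp.add_apply, mul_add]
  | single p c =>
    rw [sop_single, add_zero, single_apply, single_apply]
    split_ifs with h
    · rw [h]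
    · rw [mul_zero]

section

variable {p : Submodule ℂ (ℤ →₀ ℂ)}

lemma single_mem_iff_single_one_mem {r : ℤ} {c : ℂ} (hc : c ≠ 0) :
    single r c ∈ p ↔ single r 1 ∈ p := by
  rw [← smul_single_one, p.smul_mem_iff hc]

lemma single_one_mem_of_sop_invariant {b : ℤ → ℂ} {s r : ℤ}
    (hp : ∀ x ∈ p, sop b s x ∈ p) (hb : b r ≠ 0) (hr : single r 1 ∈ p) :
    single (r + s) 1 ∈ p := by
  have h := hp _ hr
  rwa [sop_single, mul_one, single_mem_iff_single_one_mem hb] at h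

lemma exists_mem_apply_eq_prod_mul {a : ℤ → ℂ} (hp : ∀ x ∈ p, sop a 0 x ∈ p)
    (S : Finset ℤ) {x : ℤ →₀ ℂ} (hx : x ∈ p) :
    ∃ z ∈ p, ∀ j, z j = (∏ r ∈ S, (a j - a r)) * x j := by
  induction S using Finset.induction_on with
  | empty => exact ⟨x, hx, fun j => by simp⟩
  | insert r S hrS ih =>
    obtain ⟨z, hz, hzj⟩ := ih
    refine ⟨sop a 0 z - a r • z, sub_mem (hp z hz) (p.smul_mem _ hz), fun j => ?_⟩
    rw [Finsupp.sub_apply, Finsupp.smul_apply, sop_zero_apply, hzj, Finset.prod_insert hrS,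
      smul_eq_mul]
    ring

lemma single_prod_mul_apply_mem_of_sop_zero_invariant {a : ℤ → ℂ}
    (hp : ∀ x ∈ p, sop a 0 x ∈ p) {x : ℤ →₀ ℂ} (hx : x ∈ p) (q : ℤ) :
    single q ((∏ r ∈ x.support.erase q, (a q - a r)) * x q) ∈ p := by
  obtain ⟨z, hz, hzj⟩ := exists_mem_apply_eq_prod_mul hp (x.support.erase q) hx
  convert hz using 1
  ext j
  rw [hzj, single_apply]
  split_ifs with hqj
  · rw [hqj]
  · by_cases hjx : j ∈ x.support
    · rw [Finset.prod_eq_zero (Finset.mem_erase.2 ⟨Ne.symm hqj, hjx⟩) (sub_self (a j)), zero_mul]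
    · rw [notMem_support_iff.1 hjx, mul_zero]

lemma exists_single_one_mem_of_sop_zero_invariant {a : ℤ → ℂ} (ha : Function.Injective a)
    (hp : ∀ x ∈ p, sop a 0 x ∈ p) (hbot : p ≠ ⊥) : ∃ q, single q 1 ∈ p := by
  obtain ⟨x, hx, hx0⟩ := Submodule.exists_mem_ne_zero_of_ne_bot hbot
  obtain ⟨q, hq⟩ := Finsupp.ne_iff.1 hx0
  have hprod : ∏ r ∈ x.support.erase q, (a q - a r) ≠ 0 :=
    Finset.prod_ne_zero_iff.2 fun r hr =>
      sub_ne_zero.2 (ha.ne (Finset.ne_of_mem_erase hr).symm)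
  exact ⟨q, (single_mem_iff_single_one_mem (mul_ne_zero hprod hq)).1
    (single_prod_mul_apply_mem_of_sop_zero_invariant hp hx q)⟩

lemma eq_top_of_forall_single_one_mem (hp : ∀ r, single r (1 : ℂ) ∈ p) : p = ⊤ := by
  rw [eq_top_iff, ← Module.Basis.span_eq (Finsupp.basisSingleOne (R := ℂ) (ι := ℤ)),
    Submodule.span_le]
  rintro _ ⟨r, rfl⟩
  simpa using hp r

end

theorem principal_series_irreducible_general (k l : ℂ)
    (h1 : ∀ p : ℤ, 2 * (p : ℂ) + k + l - 1 ≠ 0)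
    (h2 : ∀ p : ℤ, 2 * (p : ℂ) + k - l - 1 ≠ 0) :
    ∀ p : Submodule ℂ (ℤ →₀ ℂ),
      (∀ x ∈ p, Eop k l x ∈ p) →
      (∀ x ∈ p, Fop k l x ∈ p) →
      (∀ x ∈ p, Hop k x ∈ p) →
      p = ⊥ ∨ p = ⊤ := by
  intro p hE hF hH
  refine or_iff_not_imp_left.2 fun hbot => ?_
  have hH_inj : Function.Injective fun r : ℤ => -2 * ((r : ℂ) + k / 2) := fun r s hrs => by
    have : (r : ℂ) = s := by linear_combination (-1 / 2 : ℂ) * hrs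
    exact_mod_cast this
  obtain ⟨q, hq⟩ := exists_single_one_mem_of_sop_zero_invariant hH_inj hH hbot
  refine eq_top_of_forall_single_one_mem fun r => Int.inductionOn' r q hq ?_ ?_
  · refine fun r _ hr => single_one_mem_of_sop_invariant hF (fun h => ?_) hr
    exact h2 (r + 1) (by push_cast; linear_combination 2 * h)
  · refine fun r _ hr => ?_
    rw [sub_eq_add_neg]
    refine single_one_mem_of_sop_invariant hE (fun h => ?_) hr
    exact h1 r (by linear_combination -2 * h)

theorem principal_series_irreducible (k l : ℂ) (hk : k = 0 ∨ k = 1)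
    (h1 : ∀ p : ℤ, 2 * (p : ℂ) + k + l - 1 ≠ 0)
    (h2 : ∀ p : ℤ, 2 * (p : ℂ) + k - l - 1 ≠ 0) :
    ∀ p : Submodule ℂ (ℤ →₀ ℂ),
      (∀ x ∈ p, Eop k l x ∈ p) →
      (∀ x ∈ p, Fop k l x ∈ p) →
      (∀ x ∈ p, Hop k x ∈ p) →
      p = ⊥ ∨ p = ⊤ :=
  principal_series_irreducible_general k l h1 h2
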